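/- arXiv:2302.11945 — 2 statements merged into one kernel-verified Lean document; each statement's English description precedes it below -/
import Mathlib

section
/- Let R be an associative algebra with elements X₁, F and central H satisfying [X₁,F] = (α/2)·H. Let K = F² − αH·X₂ − d·X₁² − X₁⁴ where X₂ ∈ R satisfies [X₁,X₂] = F, [X₂,F] = −2X₁³ − d·X₁ (with d central). Then K commutes with X₁, i.e. [K, X₁] = 0. -/
theorem casimir_commutes_X1 {R : Type*} [Ring R] [Algebra ℚ R]
    (X₁ X₂ F H d : R) (α : ℚ)
    (hHcentral : ∀ x : R, H * x = x * H)
    (hdcentral : ∀ x : R, d * x = x * d)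
    (hX1X2 : X₁ * X₂ - X₂ * X₁ = F)
    (hX1F : X₁ * F - F * X₁ = (α / 2) • H)
    (hX2F : X₂ * F - F * X₂ = -2 * X₁ ^ 3 - d * X₁) :
    (F ^ 2 - α • (H * X₂) - d * X₁ ^ 2 - X₁ ^ 4) * X₁ -
      X₁ * (F ^ 2 - α • (H * X₂) - d * X₁ ^ 2 - X₁ ^ 4) = 0 := by
  have hFX1 : F * X₁ = X₁ * F - (α / 2) • H := by rw [← hX1F]; noncomm_ring
  have hX2X1 : X₂ * X₁ = X₁ * X₂ - F := by rw [← hX1X2]; noncomm_ring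
  have h1 : F ^ 2 * X₁ = X₁ * F ^ 2 - ((α / 2) • H) * F - F * ((α / 2) • H) := by
    rw [pow_two, mul_assoc, hFX1, mul_sub, ← mul_assoc, hFX1]; noncomm_ring
  have h2 : (α • (H * X₂)) * X₁ = X₁ * (α • (H * X₂)) - α • (H * F) := by
    rw [smul_mul_assoc, mul_assoc, hX2X1, mul_sub, ← mul_assoc, hHcentral X₁,
      mul_assoc, ← mul_smul_comm]
    rw [smul_sub, mul_smul_comm, mul_smul_comm]
  have h3 : (d * X₁ ^ 2) * X₁ = X₁ * (d * X₁ ^ 2) := by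
    rw [hdcentral (X₁ ^ 2), mul_assoc, hdcentral X₁]; noncomm_ring
  have hcF : ((α / 2) • H) * F + F * ((α / 2) • H) = α • (H * F) := by
    rw [smul_mul_assoc, mul_smul_comm, ← hHcentral F, ← add_smul]
    norm_num
  rw [sub_mul, sub_mul, sub_mul, mul_sub, mul_sub, mul_sub, h1, h2, h3]
  have h4 : X₁ ^ 4 * X₁ = X₁ * X₁ ^ 4 := by noncomm_ring
  rw [h4]
  linear_combination (norm := skip) -hcF
  noncomm_ring
end

section
/- Let R be an associative algebra with elements X₁, X₂, F and central element H satisfying [X₁,X₂] = F, [X₁,F] = −X₂, [X₂,F] = −βHX₁ (β a scalar). Then K = F² − βH·X₁² + X₂² commutes with X₁, X₂ and F. -/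
theorem casimir_DIII_commutes {k : Type*} [CommRing k] {R : Type*} [Ring R] [Algebra k R]
    (X₁ X₂ F H : R) (β : k)
    (hHcentral : ∀ x : R, H * x = x * H)
    (hX1X2 : X₁ * X₂ - X₂ * X₁ = F)
    (hX1F : X₁ * F - F * X₁ = -X₂)
    (hX2F : X₂ * F - F * X₂ = -(β • H * X₁)) :
    ((F ^ 2 - β • (H * X₁ ^ 2) + X₂ ^ 2) * X₁ =
        X₁ * (F ^ 2 - β • (H * X₁ ^ 2) + X₂ ^ 2)) ∧
    ((F ^ 2 - β • (H * X₁ ^ 2) + X₂ ^ 2) * X₂ =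
        X₂ * (F ^ 2 - β • (H * X₁ ^ 2) + X₂ ^ 2)) ∧
    ((F ^ 2 - β • (H * X₁ ^ 2) + X₂ ^ 2) * F =
        F * (F ^ 2 - β • (H * X₁ ^ 2) + X₂ ^ 2)) := by
  have h1 : F * X₁ = X₁ * F + X₂ := by
    rw [show X₂ = -(X₁ * F - F * X₁) from by rw [hX1F, neg_neg]]; abel
  have h2 : X₂ * X₁ = X₁ * X₂ - F := by
    rw [show F = X₁ * X₂ - X₂ * X₁ from hX1X2.symm]; abel
  have h3 : F * X₂ = X₂ * F + β • H * X₁ := by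
    rw [show β • H * X₁ = -(X₂ * F - F * X₂) from by rw [hX2F, neg_neg]]; abel
  have h1' : ∀ c : R, F * (X₁ * c) = X₁ * (F * c) + X₂ * c := by
    intro c; rw [← mul_assoc, h1, add_mul, mul_assoc]
  have h2' : ∀ c : R, X₂ * (X₁ * c) = X₁ * (X₂ * c) - F * c := by
    intro c; rw [← mul_assoc, h2, sub_mul, mul_assoc]
  have h3' : ∀ c : R, F * (X₂ * c) = X₂ * (F * c) + β • H * (X₁ * c) := by
    intro c; rw [← mul_assoc, h3, add_mul, mul_assoc, mul_assoc]
  have hH1 : ∀ x : R, x * H = H * x := fun x => (hHcentral x).symm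
  have hH2 : ∀ a c : R, a * (H * c) = H * (a * c) := by
    intro a c; rw [← mul_assoc, ← hHcentral a, mul_assoc]
  refine ⟨?_, ?_, ?_⟩ <;>
  · simp only [pow_two, smul_mul_assoc, mul_smul_comm, sub_mul, add_mul, mul_sub, mul_add,
      mul_assoc, h1, h2, h3, h1', h2', h3', hH1, hH2, smul_add, smul_sub]
    abel
end
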